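/- arXiv:2509.20221 — 2 statements merged into one kernel-verified Lean document; each statement's English description precedes it below -/
import Mathlib

section
/- Let k be a c₀-universal kernel on X and let P̃₁, P̃₂ be random probability measures with Var_k(P̃ᵢ) > 0 for i = 1,2. Then Corr_k(P̃₁,P̃₂) = ±1 if and only if there exists α ∈ ℝ \ {0} such that P̃₁ − E[P̃₁] = α (P̃₂ − E[P̃₂]) almost surely (as an equality of signed measures). Moreover, the sign of α coincides with the sign of Corr_k(P̃₁,P̃₂). -/
open MeasureTheory ProbabilityTheory Filter
open scoped RealInnerProductSpace ENNReal NNReal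

noncomputable section

/-- A positive-definite function `k`. -/
def IsPosDef {X : Type*} (k : X → X → ℝ) : Prop :=
  ∀ (n : ℕ) (x : Fin n → X) (c : Fin n → ℝ),
    0 ≤ ∑ i : Fin n, ∑ j : Fin n, c i * c j * k (x i) (x j)

/-- A bounded, measurable, symmetric, positive-definite kernel. -/
structure IsKernel {X : Type*} [MeasurableSpace X] (k : X → X → ℝ) : Prop where
  measurable : Measurable (Function.uncurry k)
  bounded : ∃ C : ℝ, ∀ x y, |k x y| ≤ C
  symm : ∀ x y, k x y = k y x
  posDef : IsPosDef k

/-- A realization of the reproducing kernel Hilbert space of `k`: a Hilbert space together with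
a feature map reproducing `k` whose feature vectors span a dense subspace. -/
structure FeatureMap {X : Type*} [MeasurableSpace X] (k : X → X → ℝ)
    (H : Type*) [NormedAddCommGroup H] [InnerProductSpace ℝ H] : Type _ where
  toFun : X → H
  stronglyMeasurable : StronglyMeasurable toFun
  repro : ∀ x y, ⟪toFun x, toFun y⟫ = k x y
  dense_span : Dense (Submodule.span ℝ (Set.range toFun) : Set H)

/-- Kernel mean embedding of a measure, as a Bochner integral of the feature map. -/
def meanEmb {X : Type*} [MeasurableSpace X] {k : X → X → ℝ} {H : Type*}
    [NormedAddCommGroup H] [InnerProductSpace ℝ H] [CompleteSpace H]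
    (F : FeatureMap k H) (μ : Measure X) : H :=
  ∫ x, F.toFun x ∂μ

/-- Kernel covariance of two random probability measures,
`Cov_k(P₁,P₂) = E[⟪μ_k(P₁) - E[μ_k(P₁)], μ_k(P₂) - E[μ_k(P₂)]⟫]`. -/
def kerCov {X : Type*} [MeasurableSpace X] {k : X → X → ℝ} {H : Type*}
    [NormedAddCommGroup H] [InnerProductSpace ℝ H] [CompleteSpace H]
    {Ω : Type*} [MeasurableSpace Ω]
    (F : FeatureMap k H) (Pr : Measure Ω) (P₁ P₂ : Ω → Measure X) : ℝ :=
  ∫ ω, ⟪meanEmb F (P₁ ω) - ∫ ω', meanEmb F (P₁ ω') ∂Pr,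
        meanEmb F (P₂ ω) - ∫ ω', meanEmb F (P₂ ω') ∂Pr⟫ ∂Pr

/-- Kernel variance of a random probability measure. -/
def kerVar {X : Type*} [MeasurableSpace X] {k : X → X → ℝ} {H : Type*}
    [NormedAddCommGroup H] [InnerProductSpace ℝ H] [CompleteSpace H]
    {Ω : Type*} [MeasurableSpace Ω]
    (F : FeatureMap k H) (Pr : Measure Ω) (P : Ω → Measure X) : ℝ :=
  kerCov F Pr P P

/-- Kernel correlation of two random probability measures. -/
def kerCorr {X : Type*} [MeasurableSpace X] {k : X → X → ℝ} {H : Type*}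
    [NormedAddCommGroup H] [InnerProductSpace ℝ H] [CompleteSpace H]
    {Ω : Type*} [MeasurableSpace Ω]
    (F : FeatureMap k H) (Pr : Measure Ω) (P₁ P₂ : Ω → Measure X) : ℝ :=
  kerCov F Pr P₁ P₂ / (Real.sqrt (kerVar F Pr P₁) * Real.sqrt (kerVar F Pr P₂))

/-- Covariance of two real random variables. -/
def rCov {Ω : Type*} [MeasurableSpace Ω] (Pr : Measure Ω) (U V : Ω → ℝ) : ℝ :=
  ∫ ω, (U ω - ∫ ω', U ω' ∂Pr) * (V ω - ∫ ω', V ω' ∂Pr) ∂Pr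

/-- Variance of a real random variable. -/
def rVar {Ω : Type*} [MeasurableSpace Ω] (Pr : Measure Ω) (U : Ω → ℝ) : ℝ :=
  rCov Pr U U

/-- Pearson correlation of two real random variables. -/
def rCorr {Ω : Type*} [MeasurableSpace Ω] (Pr : Measure Ω) (U V : Ω → ℝ) : ℝ :=
  rCov Pr U V / (Real.sqrt (rVar Pr U) * Real.sqrt (rVar Pr V))

end

noncomputable section

/-- A kernel vanishes at infinity (is `c₀`). -/
def IsC0Kernel {Z : Type*} [TopologicalSpace Z] (k : Z → Z → ℝ) : Prop :=
  ∀ ε : ℝ, 0 < ε → ∀ y : Z, IsCompact {x : Z | ε ≤ |k x y|}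

/-- The kernel mean embedding of a bounded signed measure,
`μ_k(ξ)(y) = ∫ k(x,y) dξ(x)`, via the Jordan decomposition. -/
def signedMeanEmb {Z : Type*} [MeasurableSpace Z] (k : Z → Z → ℝ)
    (ξ : SignedMeasure Z) : Z → ℝ := fun y =>
  (∫ x, k x y ∂ξ.toJordanDecomposition.posPart)
    - ∫ x, k x y ∂ξ.toJordanDecomposition.negPart

/-- A kernel is `c₀`-universal if it is `c₀` and its kernel mean embedding is injective
on the space of bounded signed measures. -/
def IsC0Universal {Z : Type*} [TopologicalSpace Z] [MeasurableSpace Z]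
    (k : Z → Z → ℝ) : Prop :=
  IsC0Kernel k ∧ Function.Injective (signedMeanEmb k)

/-!
Let `Gᵢ ∈ L²(Ω; H)` be the class of `ω ↦ μ_k(P̃ᵢ ω) - E[μ_k(P̃ᵢ)]`. Then
`Cov_k(P̃₁, P̃₂) = ⟪G₁, G₂⟫` and `Var_k(P̃ᵢ) = ‖Gᵢ‖²`, so `Corr_k` is the cosine of the angle between
`G₁` and `G₂`, and the equality case of Cauchy–Schwarz says that `Corr_k = ±1` exactly when
`G₁ = α G₂` with `α ≠ 0`, the sign of `α` being that of `Corr_k`. Since `E[μ_k(P̃)] = μ_k(E[P̃])`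
and the mean embedding is additive and positively homogeneous on finite measures and, by
`c₀`-universality, injective, `G₁ = α G₂` holds exactly when `P̃₁ - E[P̃₁] = α (P̃₂ - E[P̃₂])`
almost surely.
-/

section InnerProductSpace

variable {E : Type*} [NormedAddCommGroup E] [InnerProductSpace ℝ E]

lemma real_inner_div_norm_mul_norm_eq_one_or_neg_one_iff {x y : E} (hy : y ≠ 0) :
    (⟪x, y⟫ / (‖x‖ * ‖y‖) = 1 ∨ ⟪x, y⟫ / (‖x‖ * ‖y‖) = -1) ↔
      ∃ α : ℝ, α ≠ 0 ∧ x = α • y := by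
  rw [real_inner_comm, mul_comm, ← abs_eq zero_le_one, abs_real_inner_div_norm_mul_norm_eq_one_iff]
  simp [hy]

lemma real_inner_smul_left_div_norm_mul_norm_of_pos {v : E} (hv : v ≠ 0) {α : ℝ} (hα : 0 < α) :
    ⟪α • v, v⟫ / (‖α • v‖ * ‖v‖) = 1 := by
  rw [real_inner_comm, mul_comm]
  exact real_inner_div_norm_mul_norm_eq_one_of_ne_zero_of_pos_mul hv hα

lemma real_inner_smul_left_div_norm_mul_norm_of_neg {v : E} (hv : v ≠ 0) {α : ℝ} (hα : α < 0) :
    ⟪α • v, v⟫ / (‖α • v‖ * ‖v‖) = -1 := by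
  rw [real_inner_comm, mul_comm]
  exact real_inner_div_norm_mul_norm_eq_neg_one_of_ne_zero_of_neg_mul hv hα

end InnerProductSpace

lemma MeasureTheory.MemLp.toLp_eq_smul_toLp_iff {α E : Type*} [MeasurableSpace α] {μ : Measure α}
    [NormedAddCommGroup E] [NormedSpace ℝ E] {p : ℝ≥0∞} [Fact (1 ≤ p)] {f g : α → E}
    (hf : MemLp f p μ) (hg : MemLp g p μ) (c : ℝ) :
    hf.toLp f = c • hg.toLp g ↔ ∀ᵐ x ∂μ, f x = c • g x := by
  rw [← MemLp.toLp_const_smul, MemLp.toLp_eq_toLp_iff]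
  rfl

/-- Splitting `α` into its positive and negative parts leaves only nonnegative coefficients, so
that for measures both sides of the right-hand equation are again measures. -/
lemma sub_eq_smul_sub_iff_add_eq_add {V : Type*} [AddCommGroup V] [Module ℝ V]
    (x₁ y₁ x₂ y₂ : V) (α : ℝ) :
    x₁ - y₁ = α • (x₂ - y₂) ↔
      x₁ + (α.toNNReal : ℝ) • y₂ + ((-α).toNNReal : ℝ) • x₂
        = y₁ + (α.toNNReal : ℝ) • x₂ + ((-α).toNNReal : ℝ) • y₂ := by
  have hα : α = α.toNNReal - (-α).toNNReal := by
    rw [Real.coe_toNNReal', Real.coe_toNNReal', max_zero_sub_max_neg_zero_eq_self]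
  conv_lhs => rw [hα]
  constructor <;> intro h <;> linear_combination (norm := module) h

section Bind

variable {X : Type*} [MeasurableSpace X] {Ω : Type*} [MeasurableSpace Ω]

lemma MeasureTheory.Measure.integral_bind {E : Type*} [NormedAddCommGroup E] [NormedSpace ℝ E]
    (Pr : Measure Ω) {P : Ω → Measure X} (hPm : Measurable P) {f : X → E}
    (hf : Integrable f (Pr.bind P)) :
    ∫ x, f x ∂(Pr.bind P) = ∫ ω, ∫ x, f x ∂(P ω) ∂Pr := by
  let κ : Kernel Ω X := ⟨P, hPm⟩
  rw [show Pr.bind P = (κ ∘ₖ Kernel.const Unit Pr) () from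
    Measure.comp_eq_comp_const_apply (κ := κ) (μ := Pr)] at hf ⊢
  exact Kernel.integral_comp hf

lemma MeasureTheory.Measure.isFiniteMeasure_bind (Pr : Measure Ω) [IsFiniteMeasure Pr]
    {P : Ω → Measure X} (hPm : Measurable P) (hP : ∀ ω, IsProbabilityMeasure (P ω)) :
    IsFiniteMeasure (Pr.bind P) :=
  have : IsMarkovKernel (⟨P, hPm⟩ : Kernel Ω X) := ⟨hP⟩
  inferInstanceAs (IsFiniteMeasure ((⟨P, hPm⟩ : Kernel Ω X) ∘ₘ Pr))

end Bind

namespace IsKernel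

variable {X : Type*} [MeasurableSpace X] {k : X → X → ℝ}

lemma integrable (hk : IsKernel k) (y : X) (μ : Measure X) [IsFiniteMeasure μ] :
    Integrable (fun x => k x y) μ := by
  obtain ⟨C, hC⟩ := hk.bounded
  exact .of_bound (hk.measurable.comp measurable_prodMk_right).aestronglyMeasurable C
    (.of_forall fun x => hC x y)

lemma signedMeanEmb_toSignedMeasure_sub (hk : IsKernel k) (μ ν : Measure X)
    [IsFiniteMeasure μ] [IsFiniteMeasure ν] (y : X) :
    signedMeanEmb k (μ.toSignedMeasure - ν.toSignedMeasure) y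
      = ∫ x, k x y ∂μ - ∫ x, k x y ∂ν := by
  set p := (μ.toSignedMeasure - ν.toSignedMeasure).toJordanDecomposition.posPart
  set n := (μ.toSignedMeasure - ν.toSignedMeasure).toJordanDecomposition.negPart
  have hjordan : μ + n = ν + p := by
    have h := (μ.toSignedMeasure - ν.toSignedMeasure).toSignedMeasure_toJordanDecomposition
    rw [JordanDecomposition.toSignedMeasure, sub_eq_sub_iff_add_eq_add] at h
    rw [← Measure.toSignedMeasure_eq_toSignedMeasure_iff, Measure.toSignedMeasure_add,
      Measure.toSignedMeasure_add, add_comm ν.toSignedMeasure]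
    exact h.symm
  have hint := congrArg (fun ρ => ∫ x, k x y ∂ρ) hjordan
  simp only [integral_add_measure (hk.integrable y _) (hk.integrable y _)] at hint
  simp only [signedMeanEmb]
  linarith

lemma eq_of_integral_eq (hk : IsKernel k) (hinj : Function.Injective (signedMeanEmb k))
    {μ ν : Measure X} [IsFiniteMeasure μ] [IsFiniteMeasure ν]
    (h : ∀ y, ∫ x, k x y ∂μ = ∫ x, k x y ∂ν) : μ = ν := by
  have : signedMeanEmb k (μ.toSignedMeasure - ν.toSignedMeasure)
      = signedMeanEmb k (ν.toSignedMeasure - ν.toSignedMeasure) := by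
    ext y
    rw [hk.signedMeanEmb_toSignedMeasure_sub, hk.signedMeanEmb_toSignedMeasure_sub, h]
  exact Measure.toSignedMeasure_eq_toSignedMeasure_iff.mp (sub_left_injective (hinj this))

end IsKernel

namespace FeatureMap

variable {X : Type*} [MeasurableSpace X] {k : X → X → ℝ}
  {H : Type*} [NormedAddCommGroup H] [InnerProductSpace ℝ H]

lemma exists_norm_le (hk : IsKernel k) (F : FeatureMap k H) : ∃ B, ∀ x, ‖F.toFun x‖ ≤ B := by
  obtain ⟨C, hC⟩ := hk.bounded
  refine ⟨√C, fun x => Real.le_sqrt_of_sq_le ?_⟩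
  rw [← real_inner_self_eq_norm_sq, F.repro]
  exact (le_abs_self _).trans (hC x x)

lemma integrable (hk : IsKernel k) (F : FeatureMap k H) (μ : Measure X) [IsFiniteMeasure μ] :
    Integrable F.toFun μ := by
  obtain ⟨B, hB⟩ := F.exists_norm_le hk
  exact .of_bound F.stronglyMeasurable.aestronglyMeasurable B (.of_forall hB)

variable [CompleteSpace H]

lemma norm_meanEmb_le (F : FeatureMap k H) {B : ℝ} (hB : ∀ x, ‖F.toFun x‖ ≤ B)
    (μ : Measure X) [IsProbabilityMeasure μ] : ‖meanEmb F μ‖ ≤ B := by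
  simpa [meanEmb] using norm_integral_le_of_norm_le_const (μ := μ) (.of_forall hB)

lemma meanEmb_add (hk : IsKernel k) (F : FeatureMap k H) (μ ν : Measure X)
    [IsFiniteMeasure μ] [IsFiniteMeasure ν] :
    meanEmb F (μ + ν) = meanEmb F μ + meanEmb F ν :=
  integral_add_measure (F.integrable hk μ) (F.integrable hk ν)

lemma meanEmb_smul (F : FeatureMap k H) (c : ℝ≥0) (μ : Measure X) :
    meanEmb F (c • μ) = (c : ℝ) • meanEmb F μ :=
  integral_smul_nnreal_measure F.toFun c

lemma inner_meanEmb (hk : IsKernel k) (F : FeatureMap k H) (μ : Measure X) [IsFiniteMeasure μ]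
    (y : X) : ⟪meanEmb F μ, F.toFun y⟫ = ∫ x, k x y ∂μ := by
  rw [real_inner_comm, meanEmb, ← integral_inner (F.integrable hk μ)]
  congr with x
  rw [real_inner_comm, F.repro]

lemma eq_of_meanEmb_eq (hk : IsKernel k) (hinj : Function.Injective (signedMeanEmb k))
    (F : FeatureMap k H) {μ ν : Measure X} [IsFiniteMeasure μ] [IsFiniteMeasure ν]
    (h : meanEmb F μ = meanEmb F ν) : μ = ν :=
  hk.eq_of_integral_eq hinj fun y => by rw [← F.inner_meanEmb hk, h, F.inner_meanEmb hk]

lemma meanEmb_sub_eq_smul_sub_iff (hk : IsKernel k) (hinj : Function.Injective (signedMeanEmb k))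
    (F : FeatureMap k H) (μ₁ ν₁ μ₂ ν₂ : Measure X) [IsFiniteMeasure μ₁] [IsFiniteMeasure ν₁]
    [IsFiniteMeasure μ₂] [IsFiniteMeasure ν₂] (α : ℝ) :
    meanEmb F μ₁ - meanEmb F ν₁ = α • (meanEmb F μ₂ - meanEmb F ν₂) ↔
      ∀ A, MeasurableSet A →
        (μ₁ A).toReal - (ν₁ A).toReal = α * ((μ₂ A).toReal - (ν₂ A).toReal) := by
  set a := α.toNNReal
  set b := (-α).toNNReal
  calc _ ↔ meanEmb F (μ₁ + a • ν₂ + b • μ₂) = meanEmb F (ν₁ + a • μ₂ + b • ν₂) := by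
        simp only [F.meanEmb_add hk, F.meanEmb_smul]
        exact sub_eq_smul_sub_iff_add_eq_add ..
    _ ↔ μ₁ + a • ν₂ + b • μ₂ = ν₁ + a • μ₂ + b • ν₂ := ⟨F.eq_of_meanEmb_eq hk hinj, congrArg _⟩
    _ ↔ ∀ A, MeasurableSet A →
        (μ₁ + a • ν₂ + b • μ₂).real A = (ν₁ + a • μ₂ + b • ν₂).real A := by
        rw [Measure.ext_iff]
        exact forall₂_congr fun A _ => (measureReal_eq_measureReal_iff).symm
    _ ↔ _ := forall₂_congr fun A _ => by
        simp (disch := finiteness) only [measureReal_add_apply, measureReal_nnreal_smul_apply]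
        exact (sub_eq_smul_sub_iff_add_eq_add ..).symm

end FeatureMap

section RandomMeasure

variable {X : Type*} [MeasurableSpace X] {k : X → X → ℝ}
  {H : Type*} [NormedAddCommGroup H] [InnerProductSpace ℝ H] [CompleteSpace H]
  {Ω : Type*} [MeasurableSpace Ω]

lemma FeatureMap.stronglyMeasurable_meanEmb (F : FeatureMap k H) {P : Ω → Measure X}
    (hPm : Measurable P) (hP : ∀ ω, IsProbabilityMeasure (P ω)) :
    StronglyMeasurable fun ω => meanEmb F (P ω) :=
  have : IsMarkovKernel (⟨P, hPm⟩ : Kernel Ω X) := ⟨hP⟩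
  StronglyMeasurable.integral_kernel_prod_right (κ := ⟨P, hPm⟩)
    (f := fun _ => F.toFun) (F.stronglyMeasurable.comp_measurable measurable_snd)

lemma FeatureMap.integral_meanEmb (hk : IsKernel k) (F : FeatureMap k H) (Pr : Measure Ω)
    [IsFiniteMeasure Pr] {P : Ω → Measure X} (hPm : Measurable P)
    (hP : ∀ ω, IsProbabilityMeasure (P ω)) :
    ∫ ω, meanEmb F (P ω) ∂Pr = meanEmb F (Pr.bind P) := by
  have := Measure.isFiniteMeasure_bind Pr hPm hP
  exact (Measure.integral_bind Pr hPm (F.integrable hk _)).symm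

def centeredMeanEmb (F : FeatureMap k H) (Pr : Measure Ω) (P : Ω → Measure X) (ω : Ω) : H :=
  meanEmb F (P ω) - ∫ ω', meanEmb F (P ω') ∂Pr

lemma FeatureMap.memLp_centeredMeanEmb (hk : IsKernel k) (F : FeatureMap k H) (Pr : Measure Ω)
    [IsFiniteMeasure Pr] {P : Ω → Measure X} (hPm : Measurable P)
    (hP : ∀ ω, IsProbabilityMeasure (P ω)) :
    MemLp (centeredMeanEmb F Pr P) 2 Pr := by
  obtain ⟨B, hB⟩ := F.exists_norm_le hk
  have hbound : ∀ ω, ‖meanEmb F (P ω)‖ ≤ B := fun ω => F.norm_meanEmb_le hB (P ω)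
  exact .sub (.of_bound (F.stronglyMeasurable_meanEmb hPm hP).aestronglyMeasurable B
    (.of_forall hbound)) (memLp_const _)

lemma kerCov_eq_inner_toLp {F : FeatureMap k H} {Pr : Measure Ω} {P₁ P₂ : Ω → Measure X}
    (h₁ : MemLp (centeredMeanEmb F Pr P₁) 2 Pr) (h₂ : MemLp (centeredMeanEmb F Pr P₂) 2 Pr) :
    kerCov F Pr P₁ P₂ = ⟪h₁.toLp _, h₂.toLp _⟫ := by
  rw [L2.inner_def]
  refine integral_congr_ae ?_
  filter_upwards [h₁.coeFn_toLp, h₂.coeFn_toLp] with ω hω₁ hω₂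
  rw [hω₁, hω₂]
  rfl

lemma kerVar_eq_norm_sq {F : FeatureMap k H} {Pr : Measure Ω} {P : Ω → Measure X}
    (h : MemLp (centeredMeanEmb F Pr P) 2 Pr) : kerVar F Pr P = ‖h.toLp _‖ ^ 2 := by
  rw [kerVar, kerCov_eq_inner_toLp h h, real_inner_self_eq_norm_sq]

lemma kerCorr_eq_inner_div_norm_mul_norm {F : FeatureMap k H} {Pr : Measure Ω}
    {P₁ P₂ : Ω → Measure X} (h₁ : MemLp (centeredMeanEmb F Pr P₁) 2 Pr)
    (h₂ : MemLp (centeredMeanEmb F Pr P₂) 2 Pr) :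
    kerCorr F Pr P₁ P₂ = ⟪h₁.toLp _, h₂.toLp _⟫ / (‖h₁.toLp _‖ * ‖h₂.toLp _‖) := by
  rw [kerCorr, kerCov_eq_inner_toLp h₁ h₂, kerVar_eq_norm_sq h₁, kerVar_eq_norm_sq h₂,
    Real.sqrt_sq (norm_nonneg _), Real.sqrt_sq (norm_nonneg _)]

lemma FeatureMap.centeredMeanEmb_eq_smul_iff (hk : IsKernel k)
    (hinj : Function.Injective (signedMeanEmb k)) (F : FeatureMap k H) (Pr : Measure Ω)
    [IsFiniteMeasure Pr] {P₁ P₂ : Ω → Measure X} (hP₁m : Measurable P₁) (hP₂m : Measurable P₂)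
    (hP₁ : ∀ ω, IsProbabilityMeasure (P₁ ω)) (hP₂ : ∀ ω, IsProbabilityMeasure (P₂ ω))
    (α : ℝ) (ω : Ω) :
    centeredMeanEmb F Pr P₁ ω = α • centeredMeanEmb F Pr P₂ ω ↔
      ∀ A, MeasurableSet A → (P₁ ω A).toReal - (Pr.bind P₁ A).toReal
        = α * ((P₂ ω A).toReal - (Pr.bind P₂ A).toReal) := by
  have := Measure.isFiniteMeasure_bind Pr hP₁m hP₁
  have := Measure.isFiniteMeasure_bind Pr hP₂m hP₂
  rw [centeredMeanEmb, centeredMeanEmb, F.integral_meanEmb hk Pr hP₁m hP₁,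
    F.integral_meanEmb hk Pr hP₂m hP₂]
  exact F.meanEmb_sub_eq_smul_sub_iff hk hinj _ _ _ _ α

end RandomMeasure

theorem stmt_4_general
    {X : Type*} [TopologicalSpace X] [MeasurableSpace X]
    {k : X → X → ℝ} (hk : IsKernel k) (hk0 : IsC0Universal k)
    {H : Type*} [NormedAddCommGroup H] [InnerProductSpace ℝ H] [CompleteSpace H]
    (F : FeatureMap k H)
    {Ω : Type*} [MeasurableSpace Ω] (Pr : Measure Ω) [IsProbabilityMeasure Pr]
    (P₁ P₂ : Ω → Measure X)
    (hP₁ : ∀ ω, IsProbabilityMeasure (P₁ ω)) (hP₂ : ∀ ω, IsProbabilityMeasure (P₂ ω))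
    (hP₁m : Measurable P₁) (hP₂m : Measurable P₂)
    (hV₂ : 0 < kerVar F Pr P₂) :
    ((kerCorr F Pr P₁ P₂ = 1 ∨ kerCorr F Pr P₁ P₂ = -1) ↔
      ∃ α : ℝ, α ≠ 0 ∧
        ∀ᵐ ω ∂Pr, ∀ A : Set X, MeasurableSet A →
          (P₁ ω A).toReal - (Pr.bind P₁ A).toReal
            = α * ((P₂ ω A).toReal - (Pr.bind P₂ A).toReal)) ∧
    (∀ α : ℝ, α ≠ 0 →
      (∀ᵐ ω ∂Pr, ∀ A : Set X, MeasurableSet A →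
          (P₁ ω A).toReal - (Pr.bind P₁ A).toReal
            = α * ((P₂ ω A).toReal - (Pr.bind P₂ A).toReal)) →
      ((0 < α ↔ kerCorr F Pr P₁ P₂ = 1) ∧ (α < 0 ↔ kerCorr F Pr P₁ P₂ = -1))) := by
  have h₁ := F.memLp_centeredMeanEmb hk Pr hP₁m hP₁
  have h₂ := F.memLp_centeredMeanEmb hk Pr hP₂m hP₂
  have hG₂ : h₂.toLp _ ≠ 0 := by
    rintro h
    simp [kerVar_eq_norm_sq h₂, h] at hV₂
  have hrel : ∀ α : ℝ, h₁.toLp _ = α • h₂.toLp _ ↔ ∀ᵐ ω ∂Pr, ∀ A : Set X, MeasurableSet A →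
      (P₁ ω A).toReal - (Pr.bind P₁ A).toReal
        = α * ((P₂ ω A).toReal - (Pr.bind P₂ A).toReal) := fun α => by
    rw [MemLp.toLp_eq_smul_toLp_iff]
    exact eventually_congr (.of_forall
      (F.centeredMeanEmb_eq_smul_iff hk hk0.2 Pr hP₁m hP₂m hP₁ hP₂ α))
  rw [kerCorr_eq_inner_div_norm_mul_norm h₁ h₂]
  refine ⟨?_, fun α hα hR => ?_⟩
  · simp_rw [← hrel]
    exact real_inner_div_norm_mul_norm_eq_one_or_neg_one_iff hG₂
  · rw [(hrel α).mpr hR]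
    rcases hα.lt_or_gt with hneg | hpos
    · rw [real_inner_smul_left_div_norm_mul_norm_of_neg hG₂ hneg]
      norm_num [hneg, hneg.not_gt]
    · rw [real_inner_smul_left_div_norm_mul_norm_of_pos hG₂ hpos]
      norm_num [hpos, hpos.not_gt]

theorem stmt_4
    {X : Type*} [TopologicalSpace X] [PolishSpace X] [LocallyCompactSpace X]
    [MeasurableSpace X] [BorelSpace X]
    {k : X → X → ℝ} (hk : IsKernel k) (hk0 : IsC0Universal k)
    {H : Type*} [NormedAddCommGroup H] [InnerProductSpace ℝ H] [CompleteSpace H]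
    (F : FeatureMap k H)
    {Ω : Type*} [MeasurableSpace Ω] (Pr : Measure Ω) [IsProbabilityMeasure Pr]
    (P₁ P₂ : Ω → Measure X)
    (hP₁ : ∀ ω, IsProbabilityMeasure (P₁ ω)) (hP₂ : ∀ ω, IsProbabilityMeasure (P₂ ω))
    (hP₁m : Measurable P₁) (hP₂m : Measurable P₂)
    (hV₁ : 0 < kerVar F Pr P₁) (hV₂ : 0 < kerVar F Pr P₂) :
    ((kerCorr F Pr P₁ P₂ = 1 ∨ kerCorr F Pr P₁ P₂ = -1) ↔
      ∃ α : ℝ, α ≠ 0 ∧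
        ∀ᵐ ω ∂Pr, ∀ A : Set X, MeasurableSet A →
          (P₁ ω A).toReal - (Pr.bind P₁ A).toReal
            = α * ((P₂ ω A).toReal - (Pr.bind P₂ A).toReal)) ∧
    (∀ α : ℝ, α ≠ 0 →
      (∀ᵐ ω ∂Pr, ∀ A : Set X, MeasurableSet A →
          (P₁ ω A).toReal - (Pr.bind P₁ A).toReal
            = α * ((P₂ ω A).toReal - (Pr.bind P₂ A).toReal)) →
      ((0 < α ↔ kerCorr F Pr P₁ P₂ = 1) ∧ (α < 0 ↔ kerCorr F Pr P₁ P₂ = -1))) :=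
  stmt_4_general hk hk0 F Pr P₁ P₂ hP₁ hP₂ hP₁m hP₂m hV₂

end
end

section
/- Let (X_{1,1}, X_{2,1}, X_{1,2}, X_{2,2}) be observations from the partially exchangeable model X_{i,j} | (P̃₁,P̃₂) iid ∼ P̃ᵢ, with (P̃₁,P̃₂) ∼ Q. Then Cov_k(P̃₁,P̃₂) = Cov_{H_k}(k(X_{1,1},·), k(X_{2,1},·)) and Var_k(P̃ᵢ) = Cov_{H_k}(k(X_{i,1},·), k(X_{i,2},·)) for i = 1,2. In particular, when the kernel variances are strictly positive, Corr_k(P̃₁,P̃₂) = Cov_{H_k}(k(X_{1,1},·), k(X_{2,1},·)) / (√Cov_{H_k}(k(X_{1,1},·), k(X_{1,2},·)) · √Cov_{H_k}(k(X_{2,1},·), k(X_{2,2},·))). -/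
open MeasureTheory ProbabilityTheory Filter
open scoped RealInnerProductSpace ENNReal NNReal

noncomputable section

/-- Covariance of two Hilbert-space-valued random elements,
`Cov_H(U,V) = E[⟪U - E[U], V - E[V]⟫]`. -/
def hilbCov {Ω : Type*} [MeasurableSpace Ω] {H : Type*}
    [NormedAddCommGroup H] [InnerProductSpace ℝ H] [CompleteSpace H]
    (Pr : Measure Ω) (U V : Ω → H) : ℝ :=
  ∫ ω, ⟪U ω - ∫ ω', U ω' ∂Pr, V ω - ∫ ω', V ω' ∂Pr⟫ ∂Pr

/-- The σ-algebra generated by the pair of random probability measures. -/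
def mGen {X : Type*} [MeasurableSpace X] {Ω : Type*}
    (P₁ P₂ : Ω → Measure X) : MeasurableSpace Ω :=
  MeasurableSpace.comap (fun ω => (P₁ ω, P₂ ω)) inferInstance

/-!
Write `φ` for the feature map and `μ(P) = ∫ φ dP` for the mean embedding. Both covariances
expand as `E⟪U, V⟫ - ⟪E U, E V⟫`. If `(Y, Z)` given `(P̃₁, P̃₂)` has law `P̃₁ ⊗ P̃₂`, then
integrating first over this conditional law gives `E φ(Y) = E μ(P̃₁)`, `E φ(Z) = E μ(P̃₂)` and,
by Fubini and bilinearity of the inner product, `E⟪φ(Y), φ(Z)⟫ = E⟪μ(P̃₁), μ(P̃₂)⟫`. Taking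
`(Y, Z) = (X₁₁, X₂₁)`, `(X₁₁, X₁₂)` and `(X₂₁, X₂₂)` gives the three identities, and the
correlation identity follows by substitution.
-/

lemma norm_inner_le_mul_of_norm_le {H : Type*} [NormedAddCommGroup H] [InnerProductSpace ℝ H]
    {a b : H} {C : ℝ} (ha : ‖a‖ ≤ C) (hb : ‖b‖ ≤ C) :
    ‖⟪a, b⟫‖ ≤ C * C :=
  (norm_inner_le_norm a b).trans (mul_le_mul ha hb (norm_nonneg b) ((norm_nonneg a).trans ha))

section HilbertCovariance

variable {Ω H : Type*} [MeasurableSpace Ω] [NormedAddCommGroup H] [InnerProductSpace ℝ H]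
  [CompleteSpace H]

lemma hilbCov_eq_integral_inner_sub (Pr : Measure Ω) [IsProbabilityMeasure Pr] {U V : Ω → H}
    (hU : Integrable U Pr) (hV : Integrable V Pr)
    (hUV : Integrable (fun ω => ⟪U ω, V ω⟫) Pr) :
    hilbCov Pr U V = ∫ ω, ⟪U ω, V ω⟫ ∂Pr - ⟪∫ ω, U ω ∂Pr, ∫ ω, V ω ∂Pr⟫ := by
  rw [hilbCov]
  set c := ∫ ω, U ω ∂Pr
  set d := ∫ ω, V ω ∂Pr
  have hUd : ∫ ω, ⟪U ω, d⟫ ∂Pr = ⟪c, d⟫ := by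
    simpa only [real_inner_comm d] using integral_inner hU d
  have hcV : ∫ ω, ⟪c, V ω⟫ ∂Pr = ⟪c, d⟫ := integral_inner hV c
  have hUd_int : Integrable (fun ω => ⟪U ω, d⟫) Pr := by
    simpa only [real_inner_comm d] using hU.const_inner d
  have hcV_int : Integrable (fun ω => ⟪c, V ω⟫) Pr := hV.const_inner c
  have hUV_cV : Integrable (fun ω => ⟪U ω, V ω⟫ - ⟪c, V ω⟫) Pr := hUV.sub hcV_int
  have hUd_cd : Integrable (fun ω => ⟪U ω, d⟫ - ⟪c, d⟫) Pr := hUd_int.sub (integrable_const _)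
  simp only [inner_sub_left, inner_sub_right]
  rw [integral_sub hUV_cV hUd_cd, integral_sub hUV hcV_int,
    integral_sub hUd_int (integrable_const _), hUd, hcV]
  simp

lemma hilbCov_eq_integral_inner_sub_of_norm_le (Pr : Measure Ω) [IsProbabilityMeasure Pr]
    {U V : Ω → H} (hU : AEStronglyMeasurable U Pr) (hV : AEStronglyMeasurable V Pr) {C : ℝ}
    (hUC : ∀ ω, ‖U ω‖ ≤ C) (hVC : ∀ ω, ‖V ω‖ ≤ C) :
    hilbCov Pr U V = ∫ ω, ⟪U ω, V ω⟫ ∂Pr - ⟪∫ ω, U ω ∂Pr, ∫ ω, V ω ∂Pr⟫ :=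
  hilbCov_eq_integral_inner_sub Pr (.of_bound hU C (ae_of_all _ hUC))
    (.of_bound hV C (ae_of_all _ hVC))
    (.of_bound (hU.inner hV) (C * C)
      (ae_of_all _ fun ω => norm_inner_le_mul_of_norm_le (hUC ω) (hVC ω)))

end HilbertCovariance

section KernelLaw

variable {Ω α β E : Type*} [MeasurableSpace Ω] [MeasurableSpace α] [MeasurableSpace β]
  [NormedAddCommGroup E] [NormedSpace ℝ E]

lemma MeasureTheory.Measure.integral_comp {μ : Measure Ω} [SFinite μ] {κ : Kernel Ω α}
    [IsSFiniteKernel κ] {f : α → E} (hf : Integrable f (κ ∘ₘ μ)) :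
    ∫ y, f y ∂(κ ∘ₘ μ) = ∫ x, ∫ y, f y ∂κ x ∂μ := by
  rw [Measure.comp_eq_comp_const_apply] at hf ⊢
  exact Kernel.integral_comp hf

lemma map_prodMk_eq_prod_comp {Pr : Measure Ω} [IsProbabilityMeasure Pr]
    (κ : Kernel Ω α) (η : Kernel Ω β) [IsMarkovKernel κ] [IsMarkovKernel η]
    {Y : Ω → α} {Z : Ω → β} (hY : Measurable Y) (hZ : Measurable Z)
    (h : ∀ A B, MeasurableSet A → MeasurableSet B →
      Pr (Y ⁻¹' A ∩ Z ⁻¹' B) = ∫⁻ ω, κ ω A * η ω B ∂Pr) :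
    Pr.map (fun ω => (Y ω, Z ω)) = (κ ×ₖ η) ∘ₘ Pr := by
  have : IsProbabilityMeasure (Pr.map fun ω => (Y ω, Z ω)) :=
    Measure.isProbabilityMeasure_map (hY.prodMk hZ).aemeasurable
  refine ext_of_generate_finite _ generateFrom_prod.symm isPiSystem_prod ?_ (by simp)
  rintro _ ⟨A, hA, B, hB, rfl⟩
  rw [Measure.map_apply (hY.prodMk hZ) (hA.prod hB),
    Measure.bind_apply (hA.prod hB) (Kernel.aemeasurable _), Set.mk_preimage_prod]
  simp_rw [Kernel.prod_apply, Measure.prod_prod]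
  exact h A B hA hB

lemma integral_prodMk_eq_integral_prod {Pr : Measure Ω} [IsProbabilityMeasure Pr]
    {κ : Kernel Ω α} {η : Kernel Ω β} [IsMarkovKernel κ] [IsMarkovKernel η]
    {Y : Ω → α} {Z : Ω → β} (hY : Measurable Y) (hZ : Measurable Z)
    (hlaw : Pr.map (fun ω => (Y ω, Z ω)) = (κ ×ₖ η) ∘ₘ Pr)
    {f : α × β → E} (hf : StronglyMeasurable f) {C : ℝ} (hC : ∀ p, ‖f p‖ ≤ C) :
    ∫ ω, f (Y ω, Z ω) ∂Pr = ∫ ω, ∫ p, f p ∂(κ ω).prod (η ω) ∂Pr := by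
  rw [← integral_map (hY.prodMk hZ).aemeasurable hf.aestronglyMeasurable, hlaw,
    Measure.integral_comp (.of_bound hf.aestronglyMeasurable C (ae_of_all _ hC))]
  simp_rw [Kernel.prod_apply]

end KernelLaw

section InnerProd

variable {α β H : Type*} [MeasurableSpace α] [MeasurableSpace β] [NormedAddCommGroup H]
  [InnerProductSpace ℝ H] [CompleteSpace H]

lemma integral_inner_prod {μ : Measure α} {ν : Measure β} [SFinite μ] [SFinite ν]
    {f : α → H} {g : β → H} (hf : Integrable f μ) (hg : Integrable g ν) :
    ∫ p, ⟪f p.1, g p.2⟫ ∂μ.prod ν = ⟪∫ x, f x ∂μ, ∫ y, g y ∂ν⟫ := by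
  have hint : Integrable (fun p : α × β => ⟪f p.1, g p.2⟫) (μ.prod ν) :=
    hf.op_fst_snd (op := fun x y : H => ⟪x, y⟫) continuous_inner
      ⟨1, fun x y => by rw [one_mul, Real.norm_eq_abs]; exact abs_real_inner_le_norm x y⟩ hg
  rw [integral_prod _ hint]
  simp only [integral_inner hg]
  rw [real_inner_comm, ← integral_inner hf]
  exact integral_congr_ae (ae_of_all _ fun x => real_inner_comm _ _)

end InnerProd

section CondIndepPair

variable {X Ω H : Type*} [MeasurableSpace X] [MeasurableSpace Ω] [NormedAddCommGroup H]
  [InnerProductSpace ℝ H] [CompleteSpace H]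

theorem hilbCov_integral_eq_hilbCov_comp (Pr : Measure Ω) [IsProbabilityMeasure Pr]
    (κ η : Kernel Ω X) [IsMarkovKernel κ] [IsMarkovKernel η]
    {φ : X → H} (hφ : StronglyMeasurable φ) {C : ℝ} (hC : ∀ x, ‖φ x‖ ≤ C)
    {Y Z : Ω → X} (hY : Measurable Y) (hZ : Measurable Z)
    (hlaw : Pr.map (fun ω => (Y ω, Z ω)) = (κ ×ₖ η) ∘ₘ Pr) :
    hilbCov Pr (fun ω => ∫ x, φ x ∂κ ω) (fun ω => ∫ x, φ x ∂η ω)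
      = hilbCov Pr (fun ω => φ (Y ω)) (fun ω => φ (Z ω)) := by
  have hφ_int (μ : Measure X) [IsProbabilityMeasure μ] : Integrable φ μ :=
    .of_bound hφ.aestronglyMeasurable C (ae_of_all _ hC)
  have hmean_le (μ : Measure X) [IsProbabilityMeasure μ] : ‖∫ x, φ x ∂μ‖ ≤ C := by
    simpa using norm_integral_le_of_norm_le_const (μ := μ) (ae_of_all _ hC)
  have hκ : StronglyMeasurable fun ω => ∫ x, φ x ∂κ ω := hφ.integral_kernel
  have hη : StronglyMeasurable fun ω => ∫ x, φ x ∂η ω := hφ.integral_kernel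
  have hφY : StronglyMeasurable fun ω => φ (Y ω) := hφ.comp_measurable hY
  have hφZ : StronglyMeasurable fun ω => φ (Z ω) := hφ.comp_measurable hZ
  have mean_fst : ∫ ω, φ (Y ω) ∂Pr = ∫ ω, ∫ x, φ x ∂κ ω ∂Pr := by
    rw [integral_prodMk_eq_integral_prod hY hZ hlaw (f := fun p => φ p.1)
      (hφ.comp_measurable measurable_fst) (fun p => hC p.1)]
    simp [integral_fun_fst]
  have mean_snd : ∫ ω, φ (Z ω) ∂Pr = ∫ ω, ∫ x, φ x ∂η ω ∂Pr := by
    rw [integral_prodMk_eq_integral_prod hY hZ hlaw (f := fun p => φ p.2)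
      (hφ.comp_measurable measurable_snd) (fun p => hC p.2)]
    simp [integral_fun_snd]
  have mean_inner : ∫ ω, ⟪φ (Y ω), φ (Z ω)⟫ ∂Pr
      = ∫ ω, ⟪∫ x, φ x ∂κ ω, ∫ x, φ x ∂η ω⟫ ∂Pr := by
    rw [integral_prodMk_eq_integral_prod hY hZ hlaw (f := fun p => ⟪φ p.1, φ p.2⟫)
      ((hφ.comp_measurable measurable_fst).inner (hφ.comp_measurable measurable_snd))
      (C := C * C) (fun p => norm_inner_le_mul_of_norm_le (hC p.1) (hC p.2))]
    simp only [integral_inner_prod (hφ_int _) (hφ_int _)]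
  rw [hilbCov_eq_integral_inner_sub_of_norm_le Pr hκ.aestronglyMeasurable
      hη.aestronglyMeasurable (fun _ => hmean_le _) (fun _ => hmean_le _),
    hilbCov_eq_integral_inner_sub_of_norm_le Pr hφY.aestronglyMeasurable
      hφZ.aestronglyMeasurable (fun _ => hC _) (fun _ => hC _),
    mean_fst, mean_snd, mean_inner]

end CondIndepPair

section FeatureMap

variable {X H : Type*} [MeasurableSpace X] {k : X → X → ℝ} [NormedAddCommGroup H]
  [InnerProductSpace ℝ H]

lemma FeatureMap.exists_norm_le_s7 (hk : IsKernel k) (F : FeatureMap k H) :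
    ∃ C, ∀ x, ‖F.toFun x‖ ≤ C := by
  obtain ⟨C, hC⟩ := hk.bounded
  refine ⟨√C, fun x => Real.le_sqrt_of_sq_le ?_⟩
  rw [← real_inner_self_eq_norm_sq, F.repro]
  exact (le_abs_self _).trans (hC x x)

theorem kerCov_eq_hilbCov_of_map_eq [CompleteSpace H] {Ω : Type*} [MeasurableSpace Ω]
    (hk : IsKernel k) (F : FeatureMap k H) (Pr : Measure Ω) [IsProbabilityMeasure Pr]
    (κ η : Kernel Ω X) [IsMarkovKernel κ] [IsMarkovKernel η]
    {Y Z : Ω → X} (hY : Measurable Y) (hZ : Measurable Z)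
    (hlaw : Pr.map (fun ω => (Y ω, Z ω)) = (κ ×ₖ η) ∘ₘ Pr) :
    kerCov F Pr κ η = hilbCov Pr (fun ω => F.toFun (Y ω)) (fun ω => F.toFun (Z ω)) :=
  have ⟨_, hC⟩ := F.exists_norm_le_s7 hk
  hilbCov_integral_eq_hilbCov_comp Pr κ η F.stronglyMeasurable hC hY hZ hlaw

end FeatureMap

theorem stmt_7_general
    {X : Type*} [MeasurableSpace X]
    {k : X → X → ℝ} (hk : IsKernel k)
    {H : Type*} [NormedAddCommGroup H] [InnerProductSpace ℝ H] [CompleteSpace H]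
    (F : FeatureMap k H)
    {Ω : Type*} [MeasurableSpace Ω] (Pr : Measure Ω) [IsProbabilityMeasure Pr]
    (P₁ P₂ : Ω → Measure X)
    (hP₁ : ∀ ω, IsProbabilityMeasure (P₁ ω)) (hP₂ : ∀ ω, IsProbabilityMeasure (P₂ ω))
    (hP₁m : Measurable P₁) (hP₂m : Measurable P₂)
    -- the four observables
    (X11 X12 X21 X22 : Ω → X)
    (hX11 : Measurable X11) (hX12 : Measurable X12)
    (hX21 : Measurable X21) (hX22 : Measurable X22)
    -- `X_{i,1}, X_{i,2}` are i.i.d. from `P̃ᵢ` given `(P̃₁,P̃₂)`, the groups being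
    -- conditionally independent given `(P̃₁,P̃₂)`
    (hmodel : ∀ (A B C D : Set X), MeasurableSet A → MeasurableSet B →
      MeasurableSet C → MeasurableSet D →
      ∀ E : Set Ω, MeasurableSet[mGen P₁ P₂] E →
      Pr (X11 ⁻¹' A ∩ X12 ⁻¹' B ∩ X21 ⁻¹' C ∩ X22 ⁻¹' D ∩ E)
        = ∫⁻ ω in E, P₁ ω A * P₁ ω B * P₂ ω C * P₂ ω D ∂Pr) :
    kerCov F Pr P₁ P₂ = hilbCov Pr (fun ω => F.toFun (X11 ω)) (fun ω => F.toFun (X21 ω)) ∧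
    kerVar F Pr P₁ = hilbCov Pr (fun ω => F.toFun (X11 ω)) (fun ω => F.toFun (X12 ω)) ∧
    kerVar F Pr P₂ = hilbCov Pr (fun ω => F.toFun (X21 ω)) (fun ω => F.toFun (X22 ω)) ∧
    (0 < kerVar F Pr P₁ → 0 < kerVar F Pr P₂ →
      kerCorr F Pr P₁ P₂ =
        hilbCov Pr (fun ω => F.toFun (X11 ω)) (fun ω => F.toFun (X21 ω)) /
          (Real.sqrt (hilbCov Pr (fun ω => F.toFun (X11 ω)) (fun ω => F.toFun (X12 ω)))
            * Real.sqrt (hilbCov Pr (fun ω => F.toFun (X21 ω)) (fun ω => F.toFun (X22 ω))))) := by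
  let κ₁ : Kernel Ω X := ⟨P₁, hP₁m⟩
  let κ₂ : Kernel Ω X := ⟨P₂, hP₂m⟩
  have : IsMarkovKernel κ₁ := ⟨hP₁⟩
  have : IsMarkovKernel κ₂ := ⟨hP₂⟩
  have hrect (A B C D : Set X) (hA : MeasurableSet A) (hB : MeasurableSet B)
      (hC : MeasurableSet C) (hD : MeasurableSet D) :
      Pr (X11 ⁻¹' A ∩ X12 ⁻¹' B ∩ X21 ⁻¹' C ∩ X22 ⁻¹' D)
        = ∫⁻ ω, κ₁ ω A * κ₁ ω B * κ₂ ω C * κ₂ ω D ∂Pr := by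
    have h := hmodel A B C D hA hB hC hD Set.univ MeasurableSet.univ
    rwa [Set.inter_univ, Measure.restrict_univ] at h
  have h12 : kerCov F Pr P₁ P₂ = _ := kerCov_eq_hilbCov_of_map_eq hk F Pr κ₁ κ₂ hX11 hX21 <|
    map_prodMk_eq_prod_comp κ₁ κ₂ hX11 hX21 fun A C hA hC => by
      simpa using hrect A .univ C .univ hA .univ hC .univ
  have h11 : kerVar F Pr P₁ = _ := kerCov_eq_hilbCov_of_map_eq hk F Pr κ₁ κ₁ hX11 hX12 <|
    map_prodMk_eq_prod_comp κ₁ κ₁ hX11 hX12 fun A B hA hB => by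
      simpa using hrect A B .univ .univ hA hB .univ .univ
  have h22 : kerVar F Pr P₂ = _ := kerCov_eq_hilbCov_of_map_eq hk F Pr κ₂ κ₂ hX21 hX22 <|
    map_prodMk_eq_prod_comp κ₂ κ₂ hX21 hX22 fun C D hC hD => by
      simpa [mul_assoc] using hrect .univ .univ C D .univ .univ hC hD
  refine ⟨h12, h11, h22, fun _ _ => ?_⟩
  rw [kerCorr, h12, h11, h22]

theorem stmt_7
    {X : Type*} [TopologicalSpace X] [PolishSpace X] [LocallyCompactSpace X]
    [MeasurableSpace X] [BorelSpace X]
    {k : X → X → ℝ} (hk : IsKernel k)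
    {H : Type*} [NormedAddCommGroup H] [InnerProductSpace ℝ H] [CompleteSpace H]
    (F : FeatureMap k H)
    {Ω : Type*} [MeasurableSpace Ω] (Pr : Measure Ω) [IsProbabilityMeasure Pr]
    (P₁ P₂ : Ω → Measure X)
    (hP₁ : ∀ ω, IsProbabilityMeasure (P₁ ω)) (hP₂ : ∀ ω, IsProbabilityMeasure (P₂ ω))
    (hP₁m : Measurable P₁) (hP₂m : Measurable P₂)
    -- the four observables
    (X11 X12 X21 X22 : Ω → X)
    (hX11 : Measurable X11) (hX12 : Measurable X12)
    (hX21 : Measurable X21) (hX22 : Measurable X22)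
    -- `X_{i,1}, X_{i,2}` are i.i.d. from `P̃ᵢ` given `(P̃₁,P̃₂)`, the groups being
    -- conditionally independent given `(P̃₁,P̃₂)`
    (hmodel : ∀ (A B C D : Set X), MeasurableSet A → MeasurableSet B →
      MeasurableSet C → MeasurableSet D →
      ∀ E : Set Ω, MeasurableSet[mGen P₁ P₂] E →
      Pr (X11 ⁻¹' A ∩ X12 ⁻¹' B ∩ X21 ⁻¹' C ∩ X22 ⁻¹' D ∩ E)
        = ∫⁻ ω in E, P₁ ω A * P₁ ω B * P₂ ω C * P₂ ω D ∂Pr) :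
    kerCov F Pr P₁ P₂ = hilbCov Pr (fun ω => F.toFun (X11 ω)) (fun ω => F.toFun (X21 ω)) ∧
    kerVar F Pr P₁ = hilbCov Pr (fun ω => F.toFun (X11 ω)) (fun ω => F.toFun (X12 ω)) ∧
    kerVar F Pr P₂ = hilbCov Pr (fun ω => F.toFun (X21 ω)) (fun ω => F.toFun (X22 ω)) ∧
    (0 < kerVar F Pr P₁ → 0 < kerVar F Pr P₂ →
      kerCorr F Pr P₁ P₂ =
        hilbCov Pr (fun ω => F.toFun (X11 ω)) (fun ω => F.toFun (X21 ω)) /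
          (Real.sqrt (hilbCov Pr (fun ω => F.toFun (X11 ω)) (fun ω => F.toFun (X12 ω)))
            * Real.sqrt (hilbCov Pr (fun ω => F.toFun (X21 ω)) (fun ω => F.toFun (X22 ω))))) :=
  stmt_7_general hk F Pr P₁ P₂ hP₁ hP₂ hP₁m hP₂m X11 X12 X21 X22 hX11 hX12 hX21 hX22 hmodel

end
end
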